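/- arXiv:math/0305401 — 2 statements merged into one kernel-verified Lean document; each statement's English description precedes it below -/
import Mathlib

section
/- Let H be an abelian group with an automorphism t (making H a ℤ[t,t^{-1}]-module), let k ≥ 1, z ∈ S¹ ⊂ ℂ, and let χ: H → S¹ be a character satisfying χ(t^k h) = χ(h) for all h ∈ H. Then the map α_{(z,χ)}: ℤ ⋉ H → U(k) sending (n, h) to z^n · P^n · diag(χ(h), χ(th), ..., χ(t^{k-1}h)), where P is the k×k cyclic permutation matrix, is a group homomorphism into the unitary group U(k). -/
/-!
The diagonal matrices `D h = diag(χ h, χ (t h), …, χ (t^{k-1} h))` are unitary and turn sums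
into products, and `zⁿ Pⁿ` is unitary. Conjugating `D h` by `Pᵐ` rotates its diagonal
by `m` places; since `n ↦ χ (tⁿ h)` is `k`-periodic, the rotated diagonal is `D (tᵐ h)`. Thus
`D h * Pᵐ = Pᵐ * D (tᵐ h)`, which is exactly the multiplication law of `ℤ ⋉ H`.
-/

open Matrix Function

theorem RCLike.mem_unitary_of_norm_eq_one {𝕜 : Type*} [RCLike 𝕜] {z : 𝕜} (hz : ‖z‖ = 1) :
    z ∈ unitary 𝕜 := by
  rw [Unitary.mem_iff_star_mul_self, RCLike.star_def, RCLike.conj_mul, hz]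
  norm_num

theorem Function.Periodic.apply_val_zsmul_one {α : Type*} {k : ℕ} [NeZero k] {f : ℤ → α}
    (hf : Periodic f k) (n : ℤ) : f ((n • 1 : Fin k) : ℕ) = f n := by
  have hk : (k : ℤ) ≠ 0 := Int.natCast_ne_zero.mpr (NeZero.ne k)
  open Fin.CommRing in
  rw [zsmul_one, Fin.val_intCast, Int.toNat_of_nonneg (Int.emod_nonneg n hk)]
  conv_rhs => rw [← Int.emod_add_mul_ediv n k, mul_comm]
  exact (hf.int_mul _ _).symm

theorem Function.Periodic.apply_val_add_zsmul_one {α : Type*} {k : ℕ} [NeZero k] {f : ℤ → α}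
    (hf : Periodic f k) (j : Fin k) (n : ℤ) : f ((j + n • 1 : Fin k) : ℕ) = f (j + n) := by
  have hj : j + n • 1 = ((j : ℤ) + n) • (1 : Fin k) := by
    open Fin.CommRing in
    rw [add_zsmul, natCast_zsmul, nsmul_one, Fin.cast_val_eq_self]
  rw [hj, hf.apply_val_zsmul_one]

namespace Matrix

variable {n R : Type*} [Fintype n] [DecidableEq n] [CommRing R] [StarRing R]

theorem permMatrix_mem_unitaryGroup (σ : Equiv.Perm n) : σ.permMatrix R ∈ unitaryGroup n R := by
  rw [mem_unitaryGroup_iff', star_eq_conjTranspose, conjTranspose_permMatrix, ← permMatrix_mul,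
    mul_inv_cancel, permMatrix_one]

theorem diagonal_mem_unitaryGroup {d : n → R} (hd : ∀ i, d i ∈ unitary R) :
    diagonal d ∈ unitaryGroup n R := by
  rw [mem_unitaryGroup_iff', star_eq_conjTranspose, diagonal_conjTranspose, diagonal_mul_diagonal,
    ← diagonal_one]
  exact congrArg diagonal (funext fun i => Unitary.star_mul_self_of_mem (hd i))

variable (R) in
def permMatrixUnitaryHom : Equiv.Perm n →* unitaryGroup n R :=
  (permMatrixHom (n := n) (R := R)).codRestrict _ fun σ => permMatrix_mem_unitaryGroup σ⁻¹

theorem coe_permMatrixUnitaryHom (σ : Equiv.Perm n) :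
    (permMatrixUnitaryHom R σ : Matrix n n R) = σ⁻¹.permMatrix R := rfl

theorem permMatrixUnitaryHom_apply (σ : Equiv.Perm n) (i j : n) :
    (permMatrixUnitaryHom R σ : Matrix n n R) i j = if i = σ j then 1 else 0 := by
  rw [coe_permMatrixUnitaryHom, Equiv.Perm.permMatrix, PEquiv.toMatrix_apply]
  simp [Equiv.symm_apply_eq]

theorem diagonal_mul_permMatrixUnitaryHom (σ : Equiv.Perm n) (d : n → R) :
    diagonal d * permMatrixUnitaryHom R σ = permMatrixUnitaryHom R σ * diagonal (d ∘ σ) := by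
  ext i j
  rw [diagonal_mul, mul_diagonal, permMatrixUnitaryHom_apply]
  split_ifs with h
  · simp [h]
  · simp

variable (R) in
def cyclicShift (k : ℕ) [NeZero k] : unitaryGroup (Fin k) R :=
  permMatrixUnitaryHom R (Equiv.addRight 1)

variable {k : ℕ} [NeZero k]

theorem cyclicShift_apply (i j : Fin k) :
    (cyclicShift R k : Matrix (Fin k) (Fin k) R) i j = if i = j + 1 then 1 else 0 :=
  permMatrixUnitaryHom_apply _ i j

theorem cyclicShift_zpow (m : ℤ) :
    cyclicShift R k ^ m = permMatrixUnitaryHom R (Equiv.addRight (m • 1)) := by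
  rw [cyclicShift, ← map_zpow, Equiv.zsmul_addRight]

end Matrix

section OrbitDiagonal

variable {H R : Type*} [AddCommGroup H] [CommRing R] (t : AddAut H) (χ : AddChar H R) (k : ℕ)

def orbitDiagonal (h : H) : Matrix (Fin k) (Fin k) R :=
  diagonal fun i => χ (((i : ℕ) • t) h)

theorem orbitDiagonal_add (h g : H) :
    orbitDiagonal t χ k (h + g) = orbitDiagonal t χ k h * orbitDiagonal t χ k g := by
  simp only [orbitDiagonal, diagonal_mul_diagonal, map_add, AddChar.map_add_eq_mul]

theorem orbitDiagonal_mem_unitaryGroup [StarRing R] (hχ : ∀ h, χ h ∈ unitary R) (h : H) :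
    orbitDiagonal t χ k h ∈ unitaryGroup (Fin k) R :=
  diagonal_mem_unitaryGroup fun _ => hχ _

variable {t χ k}

theorem periodic_apply_zsmul (hper : ∀ h : H, χ ((k • t) h) = χ h) (h : H) :
    Periodic (fun n : ℤ => χ ((n • t) h)) k := fun n => by
  change χ (((n + k) • t) h) = _
  rw [add_comm n, add_zsmul, AddAut.add_apply, natCast_zsmul, hper]

theorem orbitDiagonal_mul_cyclicShift_zpow [StarRing R] [NeZero k]
    (hper : ∀ h : H, χ ((k • t) h) = χ h) (m : ℤ) (h : H) :
    orbitDiagonal t χ k h * (cyclicShift R k ^ m : unitaryGroup (Fin k) R) =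
      (cyclicShift R k ^ m : unitaryGroup (Fin k) R) * orbitDiagonal t χ k ((m • t) h) := by
  rw [cyclicShift_zpow, orbitDiagonal, diagonal_mul_permMatrixUnitaryHom]
  congr 2
  ext j
  simp only [Function.comp_apply, Equiv.coe_addRight]
  rw [← natCast_zsmul, (periodic_apply_zsmul hper h).apply_val_add_zsmul_one, add_zsmul,
    AddAut.add_apply, natCast_zsmul]

end OrbitDiagonal

section ShiftCharRep

variable {H R : Type*} [AddCommGroup H] [Field R] [StarRing R]

def shiftCharRep (z : R) (t : AddAut H) (χ : AddChar H R) (k : ℕ) [NeZero k] (p : ℤ × H) :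
    Matrix (Fin k) (Fin k) R :=
  z ^ p.1 • ((cyclicShift R k ^ p.1 : unitaryGroup (Fin k) R) : Matrix (Fin k) (Fin k) R) *
    orbitDiagonal t χ k p.2

variable {k : ℕ} [NeZero k]

theorem shiftCharRep_mem_unitaryGroup {z : R} (hz : ∀ n : ℤ, z ^ n ∈ unitary R) (t : AddAut H)
    {χ : AddChar H R} (hχ : ∀ h, χ h ∈ unitary R) (p : ℤ × H) :
    shiftCharRep z t χ k p ∈ unitaryGroup (Fin k) R :=
  mul_mem (Unitary.smul_mem_of_mem (hz p.1) (cyclicShift R k ^ p.1).2)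
    (orbitDiagonal_mem_unitaryGroup t χ k hχ p.2)

theorem shiftCharRep_mul {z : R} (hz : z ≠ 0) {t : AddAut H} {χ : AddChar H R}
    (hper : ∀ h : H, χ ((k • t) h) = χ h) (n m : ℤ) (h g : H) :
    shiftCharRep z t χ k (n + m, (m • t) h + g) =
      shiftCharRep z t χ k (n, h) * shiftCharRep z t χ k (m, g) := by
  have hconj := orbitDiagonal_mul_cyclicShift_zpow hper m h
  simp only [shiftCharRep]
  set A : Matrix (Fin k) (Fin k) R := ↑(cyclicShift R k ^ n)
  set B : Matrix (Fin k) (Fin k) R := ↑(cyclicShift R k ^ m)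
  rw [zpow_add₀ hz, _root_.zpow_add, Submonoid.coe_mul, orbitDiagonal_add]
  calc (z ^ n * z ^ m) • (A * B) * (orbitDiagonal t χ k ((m • t) h) * orbitDiagonal t χ k g)
      = (z ^ n * z ^ m) • (A * (B * orbitDiagonal t χ k ((m • t) h)) * orbitDiagonal t χ k g) := by
        simp only [smul_mul_assoc, mul_assoc]
    _ = (z ^ n * z ^ m) • (A * (orbitDiagonal t χ k h * B) * orbitDiagonal t χ k g) := by
        rw [hconj]
    _ = _ := by simp only [smul_mul_assoc, mul_smul_comm, smul_smul, mul_assoc, mul_comm (z ^ m)]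

end ShiftCharRep

/-- Let `H` be an abelian group with an automorphism `t`, `k ≥ 1`, `z` on the unit
circle, and `χ : H → S¹` a character with `χ(t^k h) = χ(h)`.  Then
`α_{(z,χ)}(n, h) = zⁿ · Pⁿ · diag(χ(h), χ(th), …, χ(t^{k-1}h))`, where `P` is the
`k × k` cyclic permutation matrix, defines a homomorphism `ℤ ⋉ H → U(k)`:
each value is a unitary matrix, and `α((n,h)·(m,g)) = α(n,h) · α(m,g)` for the
semidirect-product multiplication `(n,h)(m,g) = (n+m, tᵐh + g)`. -/
theorem alpha_z_chi_is_unitary_rep (H : Type*) [AddCommGroup H] (t : AddAut H)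
    (k : ℕ) (hk : 1 ≤ k) (z : ℂ) (hz : ‖z‖ = 1)
    (χ : AddChar H ℂ) (hχ : ∀ h : H, ‖χ h‖ = 1)
    (hper : ∀ h : H, χ ((k • t) h) = χ h) :
    letI : NeZero k := ⟨Nat.one_le_iff_ne_zero.mp hk⟩
    ∃ P : Matrix.unitaryGroup (Fin k) ℂ,
      (∀ i j : Fin k, (P : Matrix (Fin k) (Fin k) ℂ) i j = if i = j + 1 then 1 else 0) ∧
      (let α : ℤ × H → Matrix (Fin k) (Fin k) ℂ := fun p =>
        z ^ p.1 • ((P ^ p.1 : Matrix.unitaryGroup (Fin k) ℂ) :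
            Matrix (Fin k) (Fin k) ℂ) *
          Matrix.diagonal (fun i : Fin k => χ (((i : ℕ) • t) p.2))
      (∀ n : ℤ, ∀ h : H, α (n, h) ∈ Matrix.unitaryGroup (Fin k) ℂ) ∧
      (∀ n m : ℤ, ∀ h g : H, α (n + m, (m • t) h + g) = α (n, h) * α (m, g))) := by
  let : NeZero k := ⟨Nat.one_le_iff_ne_zero.mp hk⟩
  have hz_unitary (n : ℤ) : z ^ n ∈ unitary ℂ :=
    RCLike.mem_unitary_of_norm_eq_one (by rw [norm_zpow, hz, _root_.one_zpow])
  have hz0 : z ≠ 0 := norm_ne_zero_iff.mp (hz ▸ one_ne_zero)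
  exact ⟨cyclicShift ℂ k, cyclicShift_apply,
    fun n h => shiftCharRep_mem_unitaryGroup hz_unitary t
      (fun h => RCLike.mem_unitary_of_norm_eq_one (hχ h)) (n, h),
    shiftCharRep_mul hz0 hper⟩
end

section
/- For any knot Alexander polynomial Δ(t) ∈ ℤ[t,t^{-1}] with Δ(1) = ±1 (in particular Δ nonzero), the group ℤ ⋉ (ℤ[t,t^{-1}]/Δ(t)) is residually finite, where ℤ acts by multiplication by t. -/
open Polynomial LaurentPolynomial

noncomputable section AlexAux

/-- Strip powers of `X` from a nonzero integer polynomial. -/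
lemma alex_X_pow_factor : ∀ (n : ℕ) (Δ : Polynomial ℤ), Δ.natDegree ≤ n → Δ ≠ 0 →
    ∃ (v : ℕ) (Δ₁ : Polynomial ℤ), Δ = X ^ v * Δ₁ ∧ Δ₁.coeff 0 ≠ 0 := by
  intro n
  induction n with
  | zero =>
    intro Δ hdeg h0
    refine ⟨0, Δ, by simp, ?_⟩
    intro hc
    have : X ∣ Δ := X_dvd_iff.mpr hc
    obtain ⟨q, rfl⟩ := this
    have hq : q ≠ 0 := by rintro rfl; simp at h0
    have := natDegree_mul (X_ne_zero (R := ℤ)) hq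
    simp [natDegree_X] at this
    omega
  | succ n ih =>
    intro Δ hdeg h0
    by_cases hc : Δ.coeff 0 = 0
    · obtain ⟨q, rfl⟩ := X_dvd_iff.mpr hc
      have hq : q ≠ 0 := by rintro rfl; simp at h0
      have hdeg' : q.natDegree ≤ n := by
        have := natDegree_mul (X_ne_zero (R := ℤ)) hq
        simp [natDegree_X] at this
        omega
      obtain ⟨v, Δ₁, h1, h2⟩ := ih q hdeg' hq
      exact ⟨v + 1, Δ₁, by rw [h1]; ring, h2⟩
    · exact ⟨0, Δ, by simp, hc⟩

/-- A polynomial whose value at 1 is ±1 is primitive. -/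
lemma alex_isPrimitive {Δ₁ : Polynomial ℤ} (h : Δ₁.eval 1 = 1 ∨ Δ₁.eval 1 = -1) :
    Δ₁.IsPrimitive := by
  have hdvd : Δ₁.content ∣ Δ₁.eval 1 := by
    rw [eval_eq_sum]
    exact Finset.dvd_sum fun i _ => by
      simpa using (content_dvd_coeff (p := Δ₁) i)
  have hu : IsUnit Δ₁.content := by
    rcases h with h | h <;> rw [h] at hdvd
    · exact isUnit_of_dvd_one hdvd
    · exact isUnit_of_dvd_one ((dvd_neg).mpr hdvd)
  rw [isPrimitive_iff_content_eq_one, ← Polynomial.normalize_content (p := Δ₁)]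
  exact normalize_eq_one.mpr hu

section Generic

variable {Δ₁ : Polynomial ℤ} {S : Type} [CommRing S]

/-- The monicized image of `Δ₁` in `S[X]`. -/
def alexDelta (Δ₁ : Polynomial ℤ) (ha : IsUnit ((Δ₁.leadingCoeff : S))) : S[X] :=
  Polynomial.C (↑ha.unit⁻¹ : S) * Δ₁.map (Int.castRingHom S)

lemma alexDelta_assoc (ha : IsUnit ((Δ₁.leadingCoeff : S))) :
    Δ₁.map (Int.castRingHom S) = Polynomial.C (↑ha.unit : S) * alexDelta Δ₁ ha := by
  rw [alexDelta, ← mul_assoc, ← C_mul, Units.mul_inv, C_1, one_mul]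

lemma alexDelta_monic [Nontrivial S] (ha : IsUnit ((Δ₁.leadingCoeff : S))) :
    (alexDelta Δ₁ ha).Monic := by
  have hne : (Int.castRingHom S) Δ₁.leadingCoeff ≠ 0 := by
    simpa using ha.ne_zero
  have h1 : (Δ₁.map (Int.castRingHom S)).leadingCoeff = (Δ₁.leadingCoeff : S) := by
    simpa using leadingCoeff_map_of_leadingCoeff_ne_zero (Int.castRingHom S) hne
  rw [Monic, alexDelta, leadingCoeff_mul', leadingCoeff_C, h1]
  · exact ha.val_inv_mul
  · rw [leadingCoeff_C, h1, ha.val_inv_mul]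
    exact one_ne_zero

/-- The target quotient ring. -/
abbrev alexQ (Δ₁ : Polynomial ℤ) (ha : IsUnit ((Δ₁.leadingCoeff : S))) : Type :=
  AdjoinRoot (alexDelta Δ₁ ha)

/-- The canonical map `ℤ[X] → S[X]/(Δ₁)`. -/
def alexθ (Δ₁ : Polynomial ℤ) (ha : IsUnit ((Δ₁.leadingCoeff : S))) :
    Polynomial ℤ →+* alexQ Δ₁ ha :=
  (AdjoinRoot.mk _).comp (mapRingHom (Int.castRingHom S))

lemma alexθ_apply (ha : IsUnit ((Δ₁.leadingCoeff : S))) (F : Polynomial ℤ) :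
    alexθ Δ₁ ha F = AdjoinRoot.mk _ (F.map (Int.castRingHom S)) := rfl

lemma alexθ_Δ (ha : IsUnit ((Δ₁.leadingCoeff : S))) : alexθ Δ₁ ha Δ₁ = 0 := by
  rw [alexθ_apply, alexDelta_assoc ha, map_mul, AdjoinRoot.mk_self, mul_zero]

lemma alexθ_X (ha : IsUnit ((Δ₁.leadingCoeff : S))) :
    alexθ Δ₁ ha X = AdjoinRoot.root _ := by
  rw [alexθ_apply]
  simp [AdjoinRoot.mk_X]

lemma alexθ_dvd (ha : IsUnit ((Δ₁.leadingCoeff : S))) (F : Polynomial ℤ)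
    (h : alexθ Δ₁ ha F = 0) :
    ∃ G : S[X], F.map (Int.castRingHom S) = Δ₁.map (Int.castRingHom S) * G := by
  rw [alexθ_apply, AdjoinRoot.mk_eq_zero] at h
  obtain ⟨G, hG⟩ := h
  refine ⟨Polynomial.C (↑ha.unit⁻¹ : S) * G, ?_⟩
  rw [hG, alexDelta_assoc ha]
  rw [show Polynomial.C (↑ha.unit : S) * alexDelta Δ₁ ha * (Polynomial.C (↑ha.unit⁻¹ : S) * G)
      = (Polynomial.C (↑ha.unit : S) * Polynomial.C (↑ha.unit⁻¹ : S)) * (alexDelta Δ₁ ha * G)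
    from by ring, ← Polynomial.C_mul, Units.mul_inv, Polynomial.C_1, one_mul]

lemma alex_eval₂_int (ha : IsUnit ((Δ₁.leadingCoeff : S))) (F : Polynomial ℤ) :
    eval₂ (Int.castRingHom (alexQ Δ₁ ha)) (AdjoinRoot.root _) F = alexθ Δ₁ ha F := by
  have h1 : (Int.castRingHom (alexQ Δ₁ ha)) =
      (algebraMap S (alexQ Δ₁ ha)).comp (Int.castRingHom S) := by
    apply RingHom.ext_int
  rw [h1, ← eval₂_map, ← aeval_def, AdjoinRoot.aeval_eq, alexθ_apply]

lemma alex_isUnit_root (ha : IsUnit ((Δ₁.leadingCoeff : S)))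
    (hb : IsUnit ((Δ₁.coeff 0 : S))) :
    IsUnit (AdjoinRoot.root (alexDelta Δ₁ ha)) := by
  set δ := alexDelta Δ₁ ha with hδ
  have hbu : IsUnit (δ.coeff 0) := by
    have : δ.coeff 0 = (↑ha.unit⁻¹ : S) * (Δ₁.coeff 0 : S) := by
      rw [hδ, alexDelta, coeff_C_mul, coeff_map]
      rfl
    rw [this]
    exact (Units.isUnit _).mul hb
  have h0 : (AdjoinRoot.mk δ) (δ.divX * X + Polynomial.C (δ.coeff 0)) = 0 := by
    rw [divX_mul_X_add, AdjoinRoot.mk_self]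
  have h1 : AdjoinRoot.mk δ δ.divX * AdjoinRoot.root δ
      + AdjoinRoot.of δ (δ.coeff 0) = 0 := by
    simpa [map_add, map_mul, AdjoinRoot.mk_X, AdjoinRoot.mk_C] using h0
  refine IsUnit.of_mul_eq_one
    (-(AdjoinRoot.of δ ↑hbu.unit⁻¹ * AdjoinRoot.mk δ δ.divX)) ?_
  have h2 : AdjoinRoot.root δ * AdjoinRoot.mk δ δ.divX
      = -AdjoinRoot.of δ (δ.coeff 0) := by
    linear_combination h1
  calc AdjoinRoot.root δ * -(AdjoinRoot.of δ ↑hbu.unit⁻¹ * AdjoinRoot.mk δ δ.divX)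
      = -(AdjoinRoot.of δ ↑hbu.unit⁻¹ * (AdjoinRoot.root δ * AdjoinRoot.mk δ δ.divX)) := by ring
    _ = AdjoinRoot.of δ ↑hbu.unit⁻¹ * AdjoinRoot.of δ (δ.coeff 0) := by rw [h2]; ring
    _ = AdjoinRoot.of δ (↑hbu.unit⁻¹ * δ.coeff 0) := by rw [map_mul]
    _ = 1 := by rw [hbu.val_inv_mul, map_one]

/-- The lift to Laurent polynomials, using that the root is a unit. -/
def alexΘ (ha : IsUnit ((Δ₁.leadingCoeff : S))) (hb : IsUnit ((Δ₁.coeff 0 : S))) :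
    LaurentPolynomial ℤ →+* alexQ Δ₁ ha :=
  letI := LaurentPolynomial.isLocalization (R := ℤ)
  IsLocalization.lift (M := Submonoid.powers (X : Polynomial ℤ))
    (S := LaurentPolynomial ℤ) (g := alexθ Δ₁ ha)
    (by
      rintro ⟨y, m, rfl⟩
      rw [map_pow, alexθ_X]
      exact (alex_isUnit_root ha hb).pow m)

lemma alexΘ_toLaurent (ha : IsUnit ((Δ₁.leadingCoeff : S)))
    (hb : IsUnit ((Δ₁.coeff 0 : S))) (F : Polynomial ℤ) :
    alexΘ ha hb (Polynomial.toLaurent F) = alexθ Δ₁ ha F := by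
  letI := LaurentPolynomial.isLocalization (R := ℤ)
  rw [← LaurentPolynomial.algebraMap_eq_toLaurent, alexΘ, IsLocalization.lift_eq]

lemma alexΘ_T (ha : IsUnit ((Δ₁.leadingCoeff : S))) (hb : IsUnit ((Δ₁.coeff 0 : S))) :
    alexΘ ha hb (T 1) = AdjoinRoot.root _ := by
  rw [← Polynomial.toLaurent_X, alexΘ_toLaurent, alexθ_X]

end Generic

section Compat

variable {Δ₁ : Polynomial ℤ} {S S' : Type} [CommRing S] [CommRing S']

/-- Compatibility map between the quotients for related coefficient rings. -/
def alexπ (χ : S' →+* S) (ha' : IsUnit ((Δ₁.leadingCoeff : S')))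
    (ha : IsUnit ((Δ₁.leadingCoeff : S))) : alexQ Δ₁ ha' →+* alexQ Δ₁ ha :=
  AdjoinRoot.lift ((algebraMap S (alexQ Δ₁ ha)).comp χ) (AdjoinRoot.root _) (by
    show Polynomial.eval₂ _ _ (Polynomial.C (↑ha'.unit⁻¹ : S') * Δ₁.map (Int.castRingHom S')) = 0
    rw [Polynomial.eval₂_mul, Polynomial.eval₂_C, Polynomial.eval₂_map]
    have h1 : (((algebraMap S (alexQ Δ₁ ha)).comp χ).comp (Int.castRingHom S'))
        = Int.castRingHom _ := RingHom.ext_int _ _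
    rw [h1, alex_eval₂_int ha, alexθ_Δ, mul_zero])

lemma alexπ_root (χ : S' →+* S) (ha' : IsUnit ((Δ₁.leadingCoeff : S')))
    (ha : IsUnit ((Δ₁.leadingCoeff : S))) :
    alexπ χ ha' ha (AdjoinRoot.root _) = AdjoinRoot.root _ :=
  AdjoinRoot.lift_root _

lemma alexπ_θ (χ : S' →+* S) (ha' : IsUnit ((Δ₁.leadingCoeff : S')))
    (ha : IsUnit ((Δ₁.leadingCoeff : S))) (F : Polynomial ℤ) :
    alexπ χ ha' ha (alexθ Δ₁ ha' F) = alexθ Δ₁ ha F := by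
  have h : (alexπ χ ha' ha).comp (alexθ Δ₁ ha') = alexθ Δ₁ ha := by
    apply Polynomial.ringHom_ext
    · intro a
      exact RingHom.congr_fun
        (RingHom.ext_int (((alexπ χ ha' ha).comp (alexθ Δ₁ ha')).comp Polynomial.C)
          ((alexθ Δ₁ ha).comp Polynomial.C)) a
    · rw [RingHom.comp_apply, alexθ_X, alexπ_root, alexθ_X]
  exact RingHom.congr_fun h F

lemma alexπ_Θ (χ : S' →+* S) (ha' : IsUnit ((Δ₁.leadingCoeff : S')))
    (ha : IsUnit ((Δ₁.leadingCoeff : S))) (hb' : IsUnit ((Δ₁.coeff 0 : S')))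
    (hb : IsUnit ((Δ₁.coeff 0 : S))) (f : LaurentPolynomial ℤ) :
    alexπ χ ha' ha (alexΘ ha' hb' f) = alexΘ ha hb f := by
  letI := LaurentPolynomial.isLocalization (R := ℤ)
  have h : (alexπ χ ha' ha).comp (alexΘ ha' hb') = alexΘ ha hb := by
    apply IsLocalization.ringHom_ext (Submonoid.powers (X : Polynomial ℤ))
    apply RingHom.ext
    intro F
    rw [RingHom.comp_apply, RingHom.comp_apply, RingHom.comp_apply,
      LaurentPolynomial.algebraMap_eq_toLaurent, alexΘ_toLaurent, alexΘ_toLaurent,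
      alexπ_θ]
  exact RingHom.congr_fun h f

lemma alexQ_finite [Fintype S] [Nontrivial S] (ha : IsUnit ((Δ₁.leadingCoeff : S))) :
    Finite (alexQ Δ₁ ha) := by
  haveI := (AdjoinRoot.powerBasis' (alexDelta_monic ha)).finite
  exact Module.finite_of_finite S

end Compat

section Key

lemma alex_key (Δ₁ : Polynomial ℤ) (hprim : Δ₁.IsPrimitive)
    (p : ℕ) [hp : Fact p.Prime] (hpa : ¬ ((p:ℤ) ∣ Δ₁.leadingCoeff))
    (F : Polynomial ℤ)
    (h : ∀ i : ℕ, F ∈ Ideal.span {Δ₁, ((p : Polynomial ℤ))^(i+1)}) : Δ₁ ∣ F := by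
  by_cases hF0 : F = 0
  · simp [hF0]
  have hΔ10 : Δ₁ ≠ 0 := by rintro rfl; exact hpa (by simp)
  have ha0 : Δ₁.leadingCoeff ≠ 0 := leadingCoeff_ne_zero.mpr hΔ10
  have ha : IsUnit ((Δ₁.leadingCoeff : ℤ_[p])) := by
    rw [PadicInt.isUnit_iff]
    refine le_antisymm (PadicInt.norm_le_one _) ?_
    by_contra hlt
    push_neg at hlt
    exact hpa ((PadicInt.norm_int_lt_one_iff_dvd _).mp hlt)
  have hθ : alexθ Δ₁ ha F = 0 := by
    set pb := AdjoinRoot.powerBasis' (alexDelta_monic ha) with hpb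
    have hrepr : pb.basis.repr (alexθ Δ₁ ha F) = 0 := by
      ext j
      set c : ℤ_[p] := pb.basis.repr (alexθ Δ₁ ha F) j with hc
      have hdvd : ∀ i : ℕ, ‖c‖ ≤ ((p:ℝ))⁻¹^(i+1) := by
        intro i
        obtain ⟨g, h', hgh⟩ := Ideal.mem_span_pair.mp (h i)
        have h1 : alexθ Δ₁ ha F = ((p : ℤ_[p])^(i+1)) • alexθ Δ₁ ha h' := by
          rw [← hgh]
          simp only [map_add, map_mul, map_pow, map_natCast, alexθ_Δ, mul_zero, zero_add]
          rw [Algebra.smul_def, map_pow, map_natCast]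
          ring
        have h2 : c = ((p:ℤ_[p])^(i+1)) * pb.basis.repr (alexθ Δ₁ ha h') j := by
          rw [hc, h1, map_smul, Finsupp.smul_apply, smul_eq_mul]
        calc ‖c‖ = ‖(p:ℤ_[p])‖^(i+1) * ‖pb.basis.repr (alexθ Δ₁ ha h') j‖ := by
              rw [h2, norm_mul, norm_pow]
          _ ≤ ((p:ℝ))⁻¹^(i+1) * 1 := by
              rw [PadicInt.norm_p]
              exact mul_le_mul_of_nonneg_left (PadicInt.norm_le_one _) (by positivity)
          _ = ((p:ℝ))⁻¹^(i+1) := mul_one _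
      by_contra hc0
      have hcpos : 0 < ‖c‖ := norm_pos_iff.mpr hc0
      have hplt : ((p:ℝ))⁻¹ < 1 := by
        rw [inv_lt_one_iff₀]
        right
        exact_mod_cast hp.out.one_lt
      obtain ⟨n, hn⟩ := exists_pow_lt_of_lt_one hcpos hplt
      have h3 : ((p:ℝ))⁻¹^(n+1) ≤ ((p:ℝ))⁻¹^n :=
        pow_le_pow_of_le_one (by positivity) hplt.le (Nat.le_succ n)
      have := hdvd n
      linarith
    have h0 : pb.basis.repr (alexθ Δ₁ ha F) = pb.basis.repr 0 := by rw [hrepr, map_zero]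
    exact pb.basis.repr.injective h0
  obtain ⟨G, hG⟩ := alexθ_dvd ha F hθ
  -- transfer to ℚ_[p]
  set ιQp : ℚ →+* ℚ_[p] := Rat.castHom ℚ_[p] with hιQp
  have hcomm : ιQp.comp (Int.castRingHom ℚ) = Int.castRingHom ℚ_[p] := RingHom.ext_int _ _
  have hdvdQp : Δ₁.map (Int.castRingHom ℚ_[p]) ∣ F.map (Int.castRingHom ℚ_[p]) := by
    have h1 : (F.map (Int.castRingHom ℤ_[p])).map (PadicInt.Coe.ringHom)
        = (Δ₁.map (Int.castRingHom ℤ_[p])).map (PadicInt.Coe.ringHom)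
          * G.map (PadicInt.Coe.ringHom) := by
      rw [hG, Polynomial.map_mul]
    rw [Polynomial.map_map, Polynomial.map_map,
      show (PadicInt.Coe.ringHom).comp (Int.castRingHom ℤ_[p]) = Int.castRingHom ℚ_[p]
        from RingHom.ext_int _ _] at h1
    exact ⟨_, h1⟩
  set DQ : Polynomial ℚ := Δ₁.map (Int.castRingHom ℚ) with hDQ
  have hDQ0 : DQ ≠ 0 := by
    rw [hDQ, Ne, Polynomial.map_eq_zero_iff (f := Int.castRingHom ℚ) Int.cast_injective]
    exact hΔ10
  set mQ : Polynomial ℚ := DQ * Polynomial.C (DQ.leadingCoeff)⁻¹ with hmQdef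
  have hmQ : mQ.Monic := monic_mul_leadingCoeff_inv hDQ0
  have hmap : mQ.map ιQp = Δ₁.map (Int.castRingHom ℚ_[p])
      * Polynomial.C (((Δ₁.leadingCoeff : ℚ_[p]))⁻¹) := by
    rw [hmQdef, Polynomial.map_mul, Polynomial.map_map, hcomm, Polynomial.map_C, map_inv₀]
    congr 2
    rw [hDQ, leadingCoeff_map_of_injective Int.cast_injective]
    simp
  have hdvdQp' : mQ.map ιQp ∣ F.map (Int.castRingHom ℚ_[p]) := by
    rw [hmap]
    -- Δ₁.map * C u⁻¹ ∣ F.map : since C u⁻¹ is a unit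
    have hu : IsUnit (Polynomial.C (((Δ₁.leadingCoeff : ℚ_[p]))⁻¹)) := by
      refine Polynomial.isUnit_C.mpr (isUnit_iff_ne_zero.mpr ?_)
      simp [Int.cast_ne_zero, ha0]
    obtain ⟨k, hk⟩ := hdvdQp
    refine ⟨Polynomial.C ((Δ₁.leadingCoeff : ℚ_[p])) * k, ?_⟩
    have hC : Polynomial.C (((Δ₁.leadingCoeff : ℚ_[p])))⁻¹
        * Polynomial.C ((Δ₁.leadingCoeff : ℚ_[p])) = 1 := by
      rw [← Polynomial.C_mul, inv_mul_cancel₀ (by simpa using ha0), Polynomial.C_1]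
    calc F.map (Int.castRingHom ℚ_[p])
        = Δ₁.map (Int.castRingHom ℚ_[p]) * k := hk
      _ = Δ₁.map (Int.castRingHom ℚ_[p]) * k
          * (Polynomial.C (((Δ₁.leadingCoeff : ℚ_[p])))⁻¹
            * Polynomial.C ((Δ₁.leadingCoeff : ℚ_[p]))) := by rw [hC, mul_one]
      _ = Δ₁.map (Int.castRingHom ℚ_[p]) * Polynomial.C (((Δ₁.leadingCoeff : ℚ_[p])))⁻¹
          * (Polynomial.C ((Δ₁.leadingCoeff : ℚ_[p])) * k) := by ring
  have hFQmod : (F.map (Int.castRingHom ℚ)) %ₘ mQ = 0 := by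
    have h1 : ((F.map (Int.castRingHom ℚ)) %ₘ mQ).map ιQp = 0 := by
      rw [Polynomial.map_modByMonic _ hmQ, Polynomial.map_map, hcomm,
        (Polynomial.modByMonic_eq_zero_iff_dvd (hmQ.map ιQp))]
      exact hdvdQp'
    rwa [Polynomial.map_eq_zero_iff ιQp.injective] at h1
  have hFQ : DQ ∣ F.map (Int.castRingHom ℚ) := by
    have h2 : mQ ∣ F.map (Int.castRingHom ℚ) :=
      (Polynomial.modByMonic_eq_zero_iff_dvd hmQ).mp hFQmod
    exact (Dvd.intro _ rfl).trans h2
  -- Gauss's lemma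
  have hcont0 : (F.content : ℚ) ≠ 0 := by
    rw [Int.cast_ne_zero, Ne, Polynomial.content_eq_zero_iff]
    exact hF0
  have hdvdprim : DQ ∣ (F.primPart).map (Int.castRingHom ℚ) := by
    obtain ⟨k, hk⟩ := hFQ
    refine ⟨Polynomial.C ((F.content : ℚ))⁻¹ * k, ?_⟩
    have h3 : (F.map (Int.castRingHom ℚ))
        = Polynomial.C ((F.content : ℚ)) * (F.primPart).map (Int.castRingHom ℚ) := by
      conv_lhs => rw [show F = Polynomial.C F.content * F.primPart from
        Polynomial.eq_C_content_mul_primPart F]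
      rw [Polynomial.map_mul, Polynomial.map_C]
      rfl
    have h4 : Polynomial.C ((F.content : ℚ)) * (F.primPart).map (Int.castRingHom ℚ)
        = DQ * k := by rw [← h3, hk]
    have h5 : Polynomial.C ((F.content : ℚ))⁻¹ * (Polynomial.C ((F.content : ℚ))
        * (F.primPart).map (Int.castRingHom ℚ)) = (F.primPart).map (Int.castRingHom ℚ) := by
      rw [← mul_assoc, ← Polynomial.C_mul, inv_mul_cancel₀ hcont0, Polynomial.C_1, one_mul]
    rw [← h5, h4]
    ring
  have hfinal : Δ₁ ∣ F.primPart := by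
    refine hprim.dvd_of_fraction_map_dvd_fraction_map (K := ℚ) ?_
    rw [algebraMap_int_eq]
    exact hdvdprim
  exact hfinal.trans (Polynomial.primPart_dvd F)

end Key

lemma alex_toMult_zpow {A : Type*} [Ring A] (u : Aˣ) (n : ℤ) (m : Multiplicative A) :
    ((AddEquiv.toMultiplicative (AddAut.mulLeft u)) ^ n) m
      = Multiplicative.ofAdd (((u ^ n : Aˣ) : A) * Multiplicative.toAdd m) := by
  let J : Multiplicative (AddAut A) →* MulAut (Multiplicative A) :=
    { toFun := fun e => AddEquiv.toMultiplicative e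
      map_one' := rfl
      map_mul' := fun _ _ => rfl }
  have h1 : (AddEquiv.toMultiplicative (AddAut.mulLeft u)) ^ n = J ((AddAut.mulLeft u) ^ n) :=
    (map_zpow J _ _).symm
  have h2 : (AddAut.mulLeft u) ^ n = AddAut.mulLeft (u ^ n) := (map_zpow AddAut.mulLeft u n).symm
  rw [h1, h2]
  rfl

end AlexAux

set_option maxHeartbeats 2000000 in
/-- For any knot Alexander polynomial `Δ` (i.e. `Δ(1) = ±1`, in particular `Δ ≠ 0`),
the group `ℤ ⋉ (ℤ[t,t⁻¹]/Δ(t))`, with `ℤ` acting by multiplication by `t`, is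
residually finite: there is a descending chain of finite-index normal subgroups
with trivial intersection. -/
theorem semidirect_alexander_residually_finite (Δ : Polynomial ℤ)
    (hΔ : Δ.eval 1 = 1 ∨ Δ.eval 1 = -1) :
    ∀ (φ : Multiplicative ℤ →*
        MulAut (Multiplicative (LaurentPolynomial ℤ ⧸ Ideal.span {Δ.toLaurent}))),
      φ = zpowersHom _ (AddEquiv.toMultiplicative
        (AddAut.mulLeft (((LaurentPolynomial.isUnit_T (R := ℤ) 1).map
          (Ideal.Quotient.mk (Ideal.span {Δ.toLaurent}))).unit))) →
      ∃ Gs : ℕ → Subgroup (SemidirectProduct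
          (Multiplicative (LaurentPolynomial ℤ ⧸ Ideal.span {Δ.toLaurent}))
          (Multiplicative ℤ) φ),
        (∀ i, (Gs i).Normal) ∧
        (∀ i, (Gs i).FiniteIndex) ∧
        (∀ i, Gs (i + 1) ≤ Gs i) ∧
        (∀ g, (∀ i, g ∈ Gs i) → g = 1) := by
  intro φ hφ
  classical
  have hΔ0 : Δ ≠ 0 := by rintro rfl; simp at hΔ
  obtain ⟨v, Δ₁, hfac, hb0⟩ := alex_X_pow_factor Δ.natDegree Δ le_rfl hΔ0
  have hΔ₁0 : Δ₁ ≠ 0 := by rintro rfl; simp at hb0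
  have ha0 : Δ₁.leadingCoeff ≠ 0 := Polynomial.leadingCoeff_ne_zero.mpr hΔ₁0
  have heval : Δ₁.eval 1 = Δ.eval 1 := by rw [hfac]; simp
  have hprim : Δ₁.IsPrimitive := alex_isPrimitive (by rw [heval]; exact hΔ)
  -- choose the prime
  obtain ⟨p, hple, hpp⟩ := Nat.exists_infinite_primes
    ((Δ₁.leadingCoeff.natAbs + (Δ₁.coeff 0).natAbs) + 1)
  haveI : Fact p.Prime := ⟨hpp⟩
  have hpaN : ¬ p ∣ Δ₁.leadingCoeff.natAbs := by
    intro hd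
    have h1 : p ≤ Δ₁.leadingCoeff.natAbs :=
      Nat.le_of_dvd (Int.natAbs_pos.mpr ha0) hd
    omega
  have hpbN : ¬ p ∣ (Δ₁.coeff 0).natAbs := by
    intro hd
    have h1 : p ≤ (Δ₁.coeff 0).natAbs :=
      Nat.le_of_dvd (Int.natAbs_pos.mpr hb0) hd
    omega
  have hpa : ¬ ((p:ℤ) ∣ Δ₁.leadingCoeff) := by
    intro hd
    exact hpaN (by simpa using Int.natAbs_dvd_natAbs.mpr hd)
  -- units in `ZMod (p^(i+1))`
  have hZcast : ∀ (i : ℕ) (z : ℤ), ¬ p ∣ z.natAbs → IsUnit ((z : ZMod (p^(i+1)))) := by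
    intro i z hz
    have hcop : Nat.Coprime z.natAbs (p^(i+1)) :=
      Nat.Coprime.pow_right _ ((hpp.coprime_iff_not_dvd.mpr hz).symm)
    have h1 : IsUnit ((z.natAbs : ZMod (p^(i+1)))) :=
      (ZMod.isUnit_iff_coprime _ _).mpr hcop
    rcases Int.natAbs_eq z with he | he
    · rw [he, Int.cast_natCast]
      exact h1
    · rw [he, Int.cast_neg, Int.cast_natCast]
      exact h1.neg
  have hZa : ∀ i : ℕ, IsUnit ((Δ₁.leadingCoeff : ZMod (p^(i+1)))) :=
    fun i => hZcast i _ hpaN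
  have hZb : ∀ i : ℕ, IsUnit (((Δ₁.coeff 0 : ℤ) : ZMod (p^(i+1)))) :=
    fun i => hZcast i _ hpbN
  -- finiteness of the quotient rings
  have hfin : ∀ i : ℕ, Finite (alexQ Δ₁ (hZa i)) := by
    intro i
    haveI : NeZero (p^(i+1)) := ⟨pow_ne_zero _ hpp.pos.ne'⟩
    haveI : Fact (1 < p^(i+1)) := ⟨Nat.one_lt_pow (Nat.succ_ne_zero i) hpp.one_lt⟩
    exact alexQ_finite (hZa i)
  -- the maps on the quotient ring
  have hker : ∀ (i : ℕ) (x : LaurentPolynomial ℤ), x ∈ Ideal.span {Δ.toLaurent} →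
      alexΘ (hZa i) (hZb i) x = 0 := by
    intro i x hx
    rw [Ideal.mem_span_singleton] at hx
    obtain ⟨c, rfl⟩ := hx
    have hΔL : alexΘ (hZa i) (hZb i) Δ.toLaurent = 0 := by
      rw [alexΘ_toLaurent, hfac, map_mul, map_pow, alexθ_Δ, mul_zero]
    rw [map_mul, hΔL, zero_mul]
  let ψ : ∀ i : ℕ, (LaurentPolynomial ℤ ⧸ Ideal.span {Δ.toLaurent}) →+* alexQ Δ₁ (hZa i) :=
    fun i => Ideal.Quotient.lift _ (alexΘ (hZa i) (hZb i)) (hker i)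
  have hψmk : ∀ (i : ℕ) (x : LaurentPolynomial ℤ),
      ψ i (Ideal.Quotient.mk _ x) = alexΘ (hZa i) (hZb i) x :=
    fun i x => Ideal.Quotient.lift_mk _ _ _
  -- units and their orders
  let w : ∀ i : ℕ, (alexQ Δ₁ (hZa i))ˣ := fun i => (alex_isUnit_root (hZa i) (hZb i)).unit
  have hwval : ∀ i : ℕ, ((w i : (alexQ Δ₁ (hZa i))ˣ) : alexQ Δ₁ (hZa i))
      = AdjoinRoot.root _ := fun i => (alex_isUnit_root (hZa i) (hZb i)).unit_spec
  let k : ℕ → ℕ := fun i => orderOf (w i)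
  let K : ℕ → ℕ := fun i => k i * (i+1).factorial
  have hkpos : ∀ i, 0 < k i := by
    intro i
    haveI := hfin i
    exact orderOf_pos _
  have hKpos : ∀ i, 0 < K i := fun i => Nat.mul_pos (hkpos i) (Nat.factorial_pos _)
  have hwK : ∀ i, w i ^ K i = 1 := by
    intro i
    show w i ^ (k i * (i+1).factorial) = 1
    rw [pow_mul, pow_orderOf_eq_one, one_pow]
  have hwz : ∀ (i : ℕ) (n : ℤ), (K i : ℤ) ∣ n → w i ^ n = 1 := by
    intro i n hn
    obtain ⟨m, rfl⟩ := hn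
    rw [zpow_mul, zpow_natCast, hwK, one_zpow]
  -- action facts
  set u0 := ((LaurentPolynomial.isUnit_T (R := ℤ) 1).map
      (Ideal.Quotient.mk (Ideal.span {Δ.toLaurent}))).unit with hu0def
  have hu0val : ((u0 : _ˣ) : LaurentPolynomial ℤ ⧸ Ideal.span {Δ.toLaurent})
      = Ideal.Quotient.mk _ (T 1) := IsUnit.unit_spec _
  have hact : ∀ (x : Multiplicative ℤ)
      (m : Multiplicative (LaurentPolynomial ℤ ⧸ Ideal.span {Δ.toLaurent})),
      Multiplicative.toAdd (φ x m)
        = ((u0 ^ Multiplicative.toAdd x : _ˣ) : _) * Multiplicative.toAdd m := by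
    intro x m
    rw [hφ, zpowersHom_apply, alex_toMult_zpow]
    rfl
  have hψu : ∀ (i : ℕ) (n : ℤ) (z : LaurentPolynomial ℤ ⧸ Ideal.span {Δ.toLaurent}),
      ψ i (((u0 ^ n : _ˣ) : _) * z) = ((w i ^ n : _ˣ) : _) * ψ i z := by
    intro i n z
    rw [map_mul]
    congr 1
    have hWu : Units.map (ψ i).toMonoidHom u0 = w i := by
      apply Units.ext
      rw [Units.coe_map]
      show ψ i ((u0 : _)) = _
      rw [hu0val, hψmk, alexΘ_T, hwval]
    calc ψ i ((u0 ^ n : _ˣ) : _)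
        = ((Units.map (ψ i).toMonoidHom (u0 ^ n) : _ˣ) : _) := by rw [Units.coe_map]; rfl
      _ = (((Units.map (ψ i).toMonoidHom u0) ^ n : _ˣ) : _) := by rw [map_zpow]
      _ = ((w i ^ n : _ˣ) : _) := by rw [hWu]
  -- the subgroups
  let Gs : ℕ → Subgroup (SemidirectProduct
      (Multiplicative (LaurentPolynomial ℤ ⧸ Ideal.span {Δ.toLaurent}))
      (Multiplicative ℤ) φ) := fun i =>
    { carrier := {g | ψ i (Multiplicative.toAdd g.left) = 0
        ∧ (K i : ℤ) ∣ Multiplicative.toAdd g.right}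
      one_mem' := by
        constructor
        · show ψ i (Multiplicative.toAdd (1 : Multiplicative _)) = 0
          simp
        · show (K i : ℤ) ∣ Multiplicative.toAdd (1 : Multiplicative ℤ)
          simp
      mul_mem' := by
        rintro a b ⟨ha1, ha2⟩ ⟨hb1, hb2⟩
        constructor
        · show ψ i (Multiplicative.toAdd ((a * b).left)) = 0
          rw [SemidirectProduct.mul_left, toAdd_mul, map_add, ha1, zero_add, hact,
            hψu, hb1, mul_zero]
        · show (K i : ℤ) ∣ Multiplicative.toAdd ((a * b).right)
          rw [SemidirectProduct.mul_right, toAdd_mul]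
          exact dvd_add ha2 hb2
      inv_mem' := by
        rintro a ⟨ha1, ha2⟩
        constructor
        · show ψ i (Multiplicative.toAdd ((a⁻¹).left)) = 0
          simp only [SemidirectProduct.inv_left, hact, toAdd_inv, hψu, map_neg, ha1,
            neg_zero, mul_zero]
        · show (K i : ℤ) ∣ Multiplicative.toAdd ((a⁻¹).right)
          rw [SemidirectProduct.inv_right, toAdd_inv]
          exact (dvd_neg).mpr ha2 }
  have hGmem : ∀ (i : ℕ) g, g ∈ Gs i ↔ (ψ i (Multiplicative.toAdd g.left) = 0
      ∧ (K i : ℤ) ∣ Multiplicative.toAdd g.right) := fun i g => Iff.rfl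
  refine ⟨Gs, ?_, ?_, ?_, ?_⟩
  · -- normality
    intro i
    constructor
    intro h hmem g
    obtain ⟨h1, h2⟩ := (hGmem i h).mp hmem
    rw [hGmem]
    constructor
    · -- left component of the conjugate
      have hL : Multiplicative.toAdd ((g * h * g⁻¹).left)
          = Multiplicative.toAdd g.left
            + ((u0 ^ (Multiplicative.toAdd g.right) : _ˣ) : _) * Multiplicative.toAdd h.left
            + ((u0 ^ (Multiplicative.toAdd g.right + Multiplicative.toAdd h.right) : _ˣ) : _)
              * (((u0 ^ (-(Multiplicative.toAdd g.right)) : _ˣ) : _)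
                * (-(Multiplicative.toAdd g.left))) := by
        simp only [SemidirectProduct.mul_left, SemidirectProduct.mul_right,
          SemidirectProduct.inv_left, SemidirectProduct.inv_right, toAdd_mul, toAdd_inv, hact]
        try ring
      rw [hL]
      simp only [map_add, hψu, map_neg, h1, mul_zero, add_zero, zero_add]
      have hw1 : (w i) ^ (Multiplicative.toAdd g.right + Multiplicative.toAdd h.right)
          * (w i) ^ (-(Multiplicative.toAdd g.right)) = 1 := by
        rw [← zpow_add]
        have he : Multiplicative.toAdd g.right + Multiplicative.toAdd h.right
            + -(Multiplicative.toAdd g.right) = Multiplicative.toAdd h.right := by ring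
        rw [he]
        exact hwz i _ h2
      rw [← mul_assoc, ← Units.val_mul, hw1, Units.val_one, one_mul]
      exact add_neg_cancel _
    · -- right component of the conjugate
      have hR : Multiplicative.toAdd ((g * h * g⁻¹).right) = Multiplicative.toAdd h.right := by
        simp only [SemidirectProduct.mul_right, SemidirectProduct.inv_right, toAdd_mul,
          toAdd_inv]
        ring
      rw [hR]
      exact h2
  · -- finite index
    intro i
    haveI := hfin i
    haveI : NeZero (K i) := ⟨(hKpos i).ne'⟩
    set q : SemidirectProduct
        (Multiplicative (LaurentPolynomial ℤ ⧸ Ideal.span {Δ.toLaurent}))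
        (Multiplicative ℤ) φ → alexQ Δ₁ (hZa i) × ZMod (K i) := fun g =>
      (ψ i (Multiplicative.toAdd g.left),
        ((Multiplicative.toAdd g.right : ℤ) : ZMod (K i))) with hqdef
    have hqiff : ∀ x y, q x = q y ↔ x⁻¹ * y ∈ Gs i := by
      intro x y
      rw [hGmem]
      have hL : Multiplicative.toAdd ((x⁻¹ * y).left)
          = ((u0 ^ (-(Multiplicative.toAdd x.right)) : _ˣ) : _)
            * (Multiplicative.toAdd y.left - Multiplicative.toAdd x.left) := by
        simp only [SemidirectProduct.mul_left, SemidirectProduct.mul_right,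
          SemidirectProduct.inv_left, SemidirectProduct.inv_right, toAdd_mul, toAdd_inv, hact]
        ring
      have hR : Multiplicative.toAdd ((x⁻¹ * y).right)
          = Multiplicative.toAdd y.right - Multiplicative.toAdd x.right := by
        simp only [SemidirectProduct.mul_right, SemidirectProduct.inv_right, toAdd_mul,
          toAdd_inv]
        ring
      rw [hL, hR]
      constructor
      · intro hxy
        have hxy1 : ψ i (Multiplicative.toAdd x.left) = ψ i (Multiplicative.toAdd y.left) :=
          congrArg Prod.fst hxy
        have hxy2 : ((Multiplicative.toAdd x.right : ℤ) : ZMod (K i))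
            = ((Multiplicative.toAdd y.right : ℤ) : ZMod (K i)) := congrArg Prod.snd hxy
        constructor
        · rw [hψu, map_sub, hxy1, sub_self, mul_zero]
        · have h3 : Multiplicative.toAdd x.right ≡ Multiplicative.toAdd y.right
              [ZMOD (K i)] := (ZMod.intCast_eq_intCast_iff _ _ _).mp hxy2
          exact Int.ModEq.dvd h3
      · rintro ⟨hz1, hz2⟩
        rw [hψu, map_sub] at hz1
        have h3 : ψ i (Multiplicative.toAdd y.left) - ψ i (Multiplicative.toAdd x.left)
            = 0 := (Units.mul_right_eq_zero _).mp hz1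
        have hc1 : ψ i (Multiplicative.toAdd x.left) = ψ i (Multiplicative.toAdd y.left) :=
          (sub_eq_zero.mp h3).symm
        have hc2 : ((Multiplicative.toAdd x.right : ℤ) : ZMod (K i))
            = ((Multiplicative.toAdd y.right : ℤ) : ZMod (K i)) :=
          (ZMod.intCast_eq_intCast_iff _ _ _).mpr (Int.modEq_iff_dvd.mpr hz2)
        exact Prod.ext_iff.mpr ⟨hc1, hc2⟩
    have hinj : Function.Injective
        (fun z : (SemidirectProduct
          (Multiplicative (LaurentPolynomial ℤ ⧸ Ideal.span {Δ.toLaurent}))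
          (Multiplicative ℤ) φ) ⧸ (Gs i) => Quotient.liftOn' z q
            (fun a b hab => (hqiff a b).mpr (QuotientGroup.leftRel_apply.mp hab))) := by
      intro z1 z2
      induction z1 using Quotient.inductionOn' with
      | h x =>
        induction z2 using Quotient.inductionOn' with
        | h y =>
          intro hxy
          exact Quotient.sound' (QuotientGroup.leftRel_apply.mpr ((hqiff x y).mp hxy))
    haveI : Finite ((SemidirectProduct
        (Multiplicative (LaurentPolynomial ℤ ⧸ Ideal.span {Δ.toLaurent}))
        (Multiplicative ℤ) φ) ⧸ (Gs i)) := Finite.of_injective _ hinj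
    exact Subgroup.finiteIndex_of_finite_quotient
  · -- descending
    intro i
    have hdvdpow : (p^(i+1) : ℕ) ∣ p^(i+2) := pow_dvd_pow p (by omega)
    have hψcomp : ∀ z, ψ i z
        = alexπ (ZMod.castHom hdvdpow (ZMod (p^(i+1)))) (hZa (i+1)) (hZa i) (ψ (i+1) z) := by
      intro z
      obtain ⟨x, rfl⟩ := Ideal.Quotient.mk_surjective z
      rw [hψmk, hψmk,
        alexπ_Θ (ZMod.castHom hdvdpow (ZMod (p^(i+1)))) (hZa (i+1)) (hZa i) (hZb (i+1)) (hZb i)]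
    have hrootcomp : alexπ (ZMod.castHom hdvdpow (ZMod (p^(i+1)))) (hZa (i+1)) (hZa i)
        ((w (i+1) : _)) = ((w i : _)) := by
      rw [hwval, hwval, alexπ_root]
    have hkdvd : k i ∣ k (i+1) := by
      apply orderOf_dvd_of_pow_eq_one
      apply Units.ext
      rw [Units.val_pow_eq_pow_val, Units.val_one]
      calc ((w i : _ˣ) : alexQ Δ₁ (hZa i)) ^ k (i+1)
          = alexπ (ZMod.castHom hdvdpow (ZMod (p^(i+1)))) (hZa (i+1)) (hZa i)
            ((w (i+1) : _)) ^ k (i+1) := by rw [hrootcomp]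
        _ = alexπ (ZMod.castHom hdvdpow (ZMod (p^(i+1)))) (hZa (i+1)) (hZa i)
            (((w (i+1) : _ˣ) : _) ^ k (i+1)) := by rw [map_pow]
        _ = alexπ (ZMod.castHom hdvdpow (ZMod (p^(i+1)))) (hZa (i+1)) (hZa i)
            (((w (i+1) ^ k (i+1) : _ˣ) : _)) := by rw [Units.val_pow_eq_pow_val]
        _ = 1 := by rw [pow_orderOf_eq_one, Units.val_one, map_one]
    have hKdvd : K i ∣ K (i+1) :=
      mul_dvd_mul hkdvd (Nat.factorial_dvd_factorial (by omega))
    intro g hg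
    obtain ⟨h1, h2⟩ := (hGmem (i+1) g).mp hg
    rw [hGmem]
    refine ⟨by rw [hψcomp, h1, map_zero], dvd_trans ?_ h2⟩
    exact Int.natCast_dvd_natCast.mpr hKdvd
  · -- trivial intersection
    intro g hg
    have hn : Multiplicative.toAdd g.right = 0 := by
      by_contra hn0
      set j := (Multiplicative.toAdd g.right).natAbs with hj
      have hd := ((hGmem j g).mp (hg j)).2
      have hKle : (K j : ℤ) ≤ |Multiplicative.toAdd g.right| :=
        Int.le_of_dvd (abs_pos.mpr hn0) ((dvd_abs _ _).mpr hd)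
      have hjK : j + 1 ≤ K j := by
        calc j + 1 ≤ (j+1).factorial := Nat.self_le_factorial _
          _ ≤ k j * (j+1).factorial := Nat.le_mul_of_pos_left _ (hkpos j)
      rw [Int.abs_eq_natAbs, ← hj] at hKle
      have : K j ≤ j := by exact_mod_cast hKle
      omega
    have hm : Multiplicative.toAdd g.left = 0 := by
      obtain ⟨f, hf⟩ := Ideal.Quotient.mk_surjective (Multiplicative.toAdd g.left)
      obtain ⟨N, F, hNF⟩ := LaurentPolynomial.exists_T_pow f
      have hθF : ∀ i, alexθ Δ₁ (hZa i) F = 0 := by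
        intro i
        have h1 : ψ i (Multiplicative.toAdd g.left) = 0 := ((hGmem i g).mp (hg i)).1
        rw [← hf, hψmk] at h1
        have h2 : alexΘ (hZa i) (hZb i) (toLaurent F) = 0 := by
          rw [hNF, map_mul, h1, zero_mul]
        rwa [alexΘ_toLaurent] at h2
      have hspan : ∀ i : ℕ, F ∈ Ideal.span {Δ₁, ((p : Polynomial ℤ))^(i+1)} := by
        intro i
        obtain ⟨G, hG⟩ := alexθ_dvd (hZa i) F (hθF i)
        obtain ⟨G', hG'⟩ := Polynomial.map_surjective
          (Int.castRingHom (ZMod (p^(i+1)))) ZMod.intCast_surjective G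
        have hdiff : Polynomial.C ((p:ℤ)^(i+1)) ∣ (F - Δ₁ * G') := by
          rw [Polynomial.C_dvd_iff_dvd_coeff]
          intro t
          have h3 : ((F - Δ₁ * G').map (Int.castRingHom (ZMod (p^(i+1))))) = 0 := by
            rw [Polynomial.map_sub, Polynomial.map_mul, hG, hG']
            ring
          have h4 := congrArg (fun q => Polynomial.coeff q t) h3
          simp only [Polynomial.coeff_map, Polynomial.coeff_zero] at h4
          have h5 := (ZMod.intCast_zmod_eq_zero_iff_dvd _ _).mp h4
          exact_mod_cast h5
        obtain ⟨H, hH⟩ := hdiff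
        rw [Ideal.mem_span_pair]
        refine ⟨G', H, ?_⟩
        have hC : ((p : Polynomial ℤ))^(i+1) = Polynomial.C ((p:ℤ)^(i+1)) := by
          rw [map_pow, map_natCast]
        rw [hC]
        have h6 : F = Δ₁ * G' + Polynomial.C ((p:ℤ)^(i+1)) * H := by
          rw [← hH]
          ring
        rw [h6]
        ring
      have hdvd : Δ₁ ∣ F := alex_key Δ₁ hprim p hpa F hspan
      have hfI : f ∈ Ideal.span {Δ.toLaurent} := by
        rw [Ideal.mem_span_singleton]
        obtain ⟨G, hG⟩ := hdvd
        refine ⟨T (-(v:ℤ)) * toLaurent G * T (-(N:ℤ)), ?_⟩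
        have h6 : toLaurent Δ = T (v:ℤ) * toLaurent Δ₁ := by
          rw [hfac, map_mul, Polynomial.toLaurent_X_pow]
        have h7 : f = toLaurent F * T (-(N:ℤ)) := by
          rw [hNF, LaurentPolynomial.mul_T_assoc]
          norm_num
        rw [h6, h7, hG, map_mul]
        rw [show T (v:ℤ) * toLaurent Δ₁ * (T (-(v:ℤ)) * toLaurent G * T (-(N:ℤ)))
            = (T (v:ℤ) * T (-(v:ℤ))) * (toLaurent Δ₁ * toLaurent G * T (-(N:ℤ))) from by ring,
          ← LaurentPolynomial.T_add, add_neg_cancel, LaurentPolynomial.T_zero, one_mul]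
        try ring
      rw [← hf, Ideal.Quotient.eq_zero_iff_mem]
      exact hfI
    refine SemidirectProduct.ext ?_ ?_
    · show g.left = 1
      rw [← ofAdd_toAdd g.left, hm, ofAdd_zero]
    · show g.right = 1
      rw [← ofAdd_toAdd g.right, hn, ofAdd_zero]
end
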